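/- Let f : R → S be a homomorphism of commutative rings, B an R-module, and J an ideal of R. If x ∈ (J•B :_R B), then f(x) ∈ ((J·S)•(S ⊗_R B) :_S (S ⊗_R B)), where J·S denotes the ideal of S generated by f(J). That is, module closures are persistent under base change. -/
import Mathlib


open TensorProduct in
/-- Persistence of module closures under base change: if `x ∈ (J•B :_R B)` then
`f(x) ∈ ((J·S)•(S ⊗_R B) :_S (S ⊗_R B))`. -/
theorem stmt3 {R S B : Type*} [CommRing R] [CommRing S] [Algebra R S]
    [AddCommGroup B] [Module R B] (J : Ideal R) (x : R)
    (hx : x ∈ (J • (⊤ : Submodule R B)).colon ⊤) :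
    algebraMap R S x ∈
      ((J.map (algebraMap R S)) • (⊤ : Submodule S (S ⊗[R] B))).colon ⊤ := by
  rw [Submodule.mem_colon] at hx ⊢
  intro p hp
  induction p using TensorProduct.induction_on with
  | zero => simp
  | tmul s b =>
      have hb : x • b ∈ J • (⊤ : Submodule R B) := hx b trivial
      have key : ∀ m ∈ J • (⊤ : Submodule R B),
          (s ⊗ₜ[R] m : S ⊗[R] B) ∈
            (J.map (algebraMap R S)) • (⊤ : Submodule S (S ⊗[R] B)) := by
        intro m hm
        refine Submodule.smul_induction_on hm ?_ ?_
        · intro j hj n _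
          have : (s ⊗ₜ[R] (j • n) : S ⊗[R] B)
              = (algebraMap R S j) • (s ⊗ₜ[R] n) := by
            rw [smul_tmul', algebraMap_smul, smul_tmul]
          rw [this]
          exact Submodule.smul_mem_smul (Ideal.mem_map_of_mem _ hj) trivial
        · intro m₁ m₂ h₁ h₂
          simpa [tmul_add] using Submodule.add_mem _ h₁ h₂
      have : (algebraMap R S x) • (s ⊗ₜ[R] b : S ⊗[R] B) = s ⊗ₜ[R] (x • b) := by
        rw [smul_tmul', algebraMap_smul, smul_tmul]
      rw [this]
      exact key _ hb
  | add p q hp' hq' =>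
      rw [smul_add]
      exact Submodule.add_mem _ (hp' trivial) (hq' trivial)
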